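/- Let p > 5 be a prime with −1 a quadratic residue and 2, 3 non-residues mod p, with p ≥ 1711. Then the path system 𝒫_p on the Paley graph G_p is non-metrizable: there is no weight function w : E(G_p) → (0,∞) such that for every pair u,v the path P_{u,v} has w-weight at most that of every other uv-path in G_p. -/

import Mathlib

open scoped Classical

/-- `a` is a (nonzero) quadratic residue in `ZMod p`. -/
def IsQR (p : ℕ) (a : ZMod p) : Prop := a ≠ 0 ∧ IsSquare a

/-- The Paley graph on `𝔽_p`: `a ~ b` iff `a - b` is a nonzero quadratic residue.
(The adjacency is stated symmetrically; when `-1` is a residue this agrees with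
the usual definition.) -/
def paley (p : ℕ) : SimpleGraph (ZMod p) where
  Adj a b := a ≠ b ∧ IsSquare (a - b) ∧ IsSquare (b - a)
  symm := by constructor; intro a b h; exact ⟨h.1.symm, h.2.2, h.2.1⟩
  loopless := by constructor; intro a h; exact h.1 rfl

/-- The list of vertices of the path `P_{a,b}` of the path system `𝒫_p`. -/
noncomputable def specList (p : ℕ) (a b : ZMod p) : List (ZMod p) :=
  if IsQR p (b - a) then [a, b]
  else if b - a = 3 then [a, a + 1, a + 2, b]
  else [a, (a + b) * (2 : ZMod p)⁻¹, b]

/-- Weight of a walk: sum of the weights of its edges. -/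
noncomputable def walkWeight {V : Type*} (w : V → V → ℝ) {G : SimpleGraph V} {u v : V}
    (W : G.Walk u v) : ℝ :=
  (W.darts.map fun d => w d.toProd.1 d.toProd.2).sum

/-- Weight of a path given by its list of vertices: sum over consecutive pairs. -/
noncomputable def listWeight {V : Type*} (w : V → V → ℝ) (l : List V) : ℝ :=
  ((l.zip l.tail).map fun q => w q.1 q.2).sum

/-!
Translations `x ↦ t + x` are automorphisms of `G_p` that preserve `𝒫_p`, so summing the
shortest-path inequalities over all translates turns them into inequalities for the function
`φ d = ∑ t, w t (t + d)` of the difference alone. Comparing `P_{0,3}` with `0, 4, 3` gives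
`2 φ 1 ≤ φ 4`, and comparing `P_{0,-3}` with `0, -1, -2, -3` gives `2 φ (3/2) ≤ 3 φ 1`.

Let `x` maximize `φ` over the residues. Then `2x` is a nonresidue other than `3`, so `P_{0,2x}`
runs through `x` and `2 φ x ≤ φ a + φ (2x - a)` whenever `a` and `2x - a` are residues: every
such `a` is again a maximizer. A maximizer `a` cannot have `2a ± 1` a residue, since then
`2 φ a ≤ φ 1 + φ a < 2 φ a`. Hence `a ↦ 2a + 1` injects the `(p - 1)/4` residues `a` with
`2x - a` a residue into the `(p - 5)/4` nonresidues `b` with `2 - b` a nonresidue; these counts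
come from the Jacobi sum of the quadratic character.
-/

open Finset

section QuadraticChar

variable {F : Type*} [Field F] [Fintype F] [DecidableEq F]

local notation "χ" => quadraticChar F

lemma quadraticChar_sum_mul_sub (hF : ringChar F ≠ 2) {c : F} (hc : c ≠ 0) :
    ∑ a : F, χ a * χ (c - a) = -χ (-1) := by
  have hJ : jacobiSum χ χ = -χ (-1) := by
    have := jacobiSum_nontrivial_inv (quadraticChar_ne_one hF)
    rwa [(quadraticChar_isQuadratic F).inv] at this
  rw [← hJ, jacobiSum, ← Fintype.sum_equiv (Equiv.mulLeft₀ c hc) _ _ fun _ => rfl]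
  refine sum_congr rfl fun x _ => ?_
  simp only [Equiv.mulLeft₀_apply, ← mul_one_sub, map_mul]
  linear_combination (χ x * χ (1 - x)) * quadraticChar_sq_one hc

lemma one_add_mul_quadraticChar {ε : ℤ} (hε : ε = 1 ∨ ε = -1) {a : F} (ha : a ≠ 0) :
    1 + ε * χ a = if χ a = ε then 2 else 0 := by
  rcases hε with rfl | rfl <;> rcases quadraticChar_dichotomy ha with h | h <;> simp [h]

lemma four_mul_card_quadraticChar_eq_and (hF : ringChar F ≠ 2) {c : F} (hc : c ≠ 0) {ε δ : ℤ}
    (hε : ε = 1 ∨ ε = -1) (hδ : δ = 1 ∨ δ = -1) :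
    4 * (#{a | χ a = ε ∧ χ (c - a) = δ} : ℤ) =
      Fintype.card F - 2 - ε * δ * χ (-1) - (ε + δ) * χ c := by
  have hε0 : ε ≠ 0 := by rcases hε with rfl | rfl <;> norm_num
  have hδ0 : δ ≠ 0 := by rcases hδ with rfl | rfl <;> norm_num
  -- `(1 + ε χ a) (1 + δ χ (c - a))` expanded: it is `4` on the counted set and `0` off it,
  -- except at `a = 0` and `a = c`
  have hterm : ∀ a, 1 + ε * χ a + δ * χ (c - a) + ε * δ * (χ a * χ (c - a)) =
      4 * (if χ a = ε ∧ χ (c - a) = δ then 1 else 0) + (if a = 0 then 1 + δ * χ c else 0) +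
        (if a = c then 1 + ε * χ c else 0) := by
    intro a
    by_cases ha : a = 0
    · subst ha
      simp [hc.symm, Ne.symm hε0]
    by_cases hac : a = c
    · subst hac
      simp [ha, Ne.symm hδ0]
    have hprod : (1 + ε * χ a) * (1 + δ * χ (c - a)) =
        (if χ a = ε then 2 else 0) * (if χ (c - a) = δ then 2 else 0) := by
      rw [one_add_mul_quadraticChar hε ha,
        one_add_mul_quadraticChar hδ (sub_ne_zero.mpr (Ne.symm hac))]
    rw [if_neg ha, if_neg hac]
    by_cases hA : χ a = ε <;> by_cases hB : χ (c - a) = δ <;>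
      simp only [hA, hB, if_true, if_false, and_self, and_false, false_and] at hprod ⊢ <;>
      linear_combination hprod
  have hsum := Fintype.sum_congr _ _ hterm
  have hshift : ∑ a : F, χ (c - a) = 0 := by
    rw [Fintype.sum_equiv (Equiv.subLeft c) (fun a => χ (c - a)) χ fun _ => rfl]
    exact quadraticChar_sum_zero hF
  simp only [sum_add_distrib, ← mul_sum] at hsum
  rw [quadraticChar_sum_zero hF, hshift, quadraticChar_sum_mul_sub hF hc] at hsum
  simp only [sum_const, card_univ, sum_ite_eq', mem_univ, if_true, sum_boole] at hsum
  linear_combination -hsum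

lemma card_quadraticChar_neg_one_lt (h1 : χ (-1) = 1) (h2 : χ 2 = -1) {c : F} (hc : χ c = -1) :
    #{b | χ b = -1 ∧ χ (2 - b) = -1} < #{a | χ a = 1 ∧ χ (c - a) = 1} := by
  have h20 : (2 : F) ≠ 0 := fun h => by simp [h] at h2
  have hc0 : c ≠ 0 := fun h => by simp [h] at hc
  have hF : ringChar F ≠ 2 := fun hF => by simp [quadraticChar_eq_one_of_char_two hF hc0] at hc
  have hY := four_mul_card_quadraticChar_eq_and hF h20 (Or.inr rfl) (Or.inr rfl)
  have hT := four_mul_card_quadraticChar_eq_and hF hc0 (Or.inl rfl) (Or.inl rfl)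
  rw [h1, h2] at hY
  rw [h1, hc] at hT
  omega

end QuadraticChar

section Weights

lemma listWeight_cons_cons {V : Type*} (w : V → V → ℝ) (a b : V) (l : List V) :
    listWeight w (a :: b :: l) = w a b + listWeight w (b :: l) :=
  rfl

lemma listWeight_singleton {V : Type*} (w : V → V → ℝ) (a : V) : listWeight w [a] = 0 :=
  rfl

lemma listWeight_map {V W : Type*} (w : W → W → ℝ) (f : V → W) (l : List V) :
    listWeight w (l.map f) = listWeight (fun x y => w (f x) (f y)) l := by
  simp [listWeight, ← List.map_tail, List.zip_map, Function.comp_def]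

lemma walkWeight_eq_listWeight_support {V : Type*} (w : V → V → ℝ) {G : SimpleGraph V}
    {u v : V} (Q : G.Walk u v) : walkWeight w Q = listWeight w Q.support := by
  induction Q with
  | nil => simp [walkWeight, listWeight]
  | cons h Q ih =>
    obtain ⟨s, hs⟩ : ∃ s, Q.support = _ :: s := ⟨_, Q.cons_tail_support.symm⟩
    simp_all [walkWeight, listWeight]

variable {G : Type*} [AddCommGroup G] [Fintype G] (w : G → G → ℝ)

noncomputable def diffWeight (d : G) : ℝ :=
  ∑ t, w t (t + d)

lemma sum_apply_add_add (a b : G) : ∑ t, w (t + a) (t + b) = diffWeight w (b - a) :=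
  Fintype.sum_equiv (Equiv.addRight a) _ _ fun t => by simp [add_assoc]

lemma diffWeight_neg {w : G → G → ℝ} (hw : ∀ a b, w a b = w b a) (d : G) :
    diffWeight w (-d) = diffWeight w d :=
  calc diffWeight w (-d) = ∑ t, w (t + -d) (t + 0) := by simp [diffWeight, hw _ (_ + -d)]
    _ = diffWeight w d := by rw [sum_apply_add_add, zero_sub, neg_neg]

lemma sum_listWeight_map_add (l : List G) :
    ∑ t, listWeight w (l.map (t + ·)) = listWeight (fun x y => diffWeight w (y - x)) l := by
  have key : ∀ L : List (G × G), ∑ t, (L.map fun q => w (t + q.1) (t + q.2)).sum =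
      (L.map fun q => diffWeight w (q.2 - q.1)).sum := by
    intro L
    induction L with
    | nil => simp
    | cons q L ih => simp [sum_add_distrib, ih, sum_apply_add_add]
  simp_rw [listWeight_map]
  exact key _

end Weights

section Residues

variable {p : ℕ} [Fact p.Prime]

lemma isQR_iff_quadraticChar_eq_one {a : ZMod p} :
    IsQR p a ↔ quadraticChar (ZMod p) a = 1 := by
  refine ⟨fun h => (quadraticChar_one_iff_isSquare h.1).mpr h.2, fun h => ?_⟩
  have ha : a ≠ 0 := fun ha => by simp [ha] at h
  exact ⟨ha, (quadraticChar_one_iff_isSquare ha).mp h⟩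

lemma isQR_one : IsQR p 1 := ⟨one_ne_zero, .one⟩

lemma isQR_four (h20 : (2 : ZMod p) ≠ 0) : IsQR p 4 :=
  ⟨fun h => mul_ne_zero h20 h20 (by rw [← h]; norm_num), 2, by norm_num⟩

lemma two_ne_zero_of_not_isQR_three (h3 : ¬IsQR p 3) : (2 : ZMod p) ≠ 0 := fun h =>
  h3 (by rw [show (3 : ZMod p) = 2 + 1 by norm_num, h, zero_add]; exact isQR_one)

lemma three_ne_zero_of_not_isQR_two (h1 : IsQR p (-1)) (h2 : ¬IsQR p 2) : (3 : ZMod p) ≠ 0 :=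
  fun h => h2 (by rwa [show (2 : ZMod p) = 3 - 1 by norm_num, h, zero_sub])

lemma not_isQR_two_mul (h2 : ¬IsQR p 2) {x : ZMod p} (hx : IsQR p x) : ¬IsQR p (2 * x) :=
  fun h2x => h2 ⟨fun h => hx.1 (by simpa [h] using h2x.1), by simpa [hx.1] using h2x.2.div hx.2⟩

end Residues

section Paley

variable {p : ℕ}

lemma paley_adj_iff (h1 : IsSquare (-1 : ZMod p)) {a b : ZMod p} :
    (paley p).Adj a b ↔ IsQR p (b - a) := by
  have hba : a - b = -1 * (b - a) := by ring
  refine ⟨fun h => ⟨sub_ne_zero.mpr (Ne.symm h.1), h.2.2⟩,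
    fun h => ⟨fun hab => h.1 (by rw [hab, sub_self]), hba ▸ h1.mul h.2, h.2⟩⟩

lemma paley_adj_add (t a b : ZMod p) : (paley p).Adj (t + a) (t + b) ↔ (paley p).Adj a b := by
  simp [paley, add_sub_add_left_eq_sub]

lemma specList_of_eq_three {a b : ZMod p} (h : ¬IsQR p (b - a)) (h3 : b - a = 3) :
    specList p a b = [a, a + 1, a + 2, b] := by
  rw [specList, if_neg h, if_pos h3]

lemma specList_of_ne_three {a b : ZMod p} (h : ¬IsQR p (b - a)) (h3 : b - a ≠ 3) :
    specList p a b = [a, (a + b) * 2⁻¹, b] := by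
  rw [specList, if_neg h, if_neg h3]

lemma specList_add [Fact p.Prime] (h20 : (2 : ZMod p) ≠ 0) (t a b : ZMod p) :
    specList p (t + a) (t + b) = (specList p a b).map (t + ·) := by
  simp only [specList, add_sub_add_left_eq_sub]
  split_ifs
  · simp
  · simp [add_assoc]
  · simp only [List.map_cons, List.map_nil, List.cons.injEq, and_true, true_and]
    field_simp
    ring

structure MetrizesPaleySystem (p : ℕ) (w : ZMod p → ZMod p → ℝ) : Prop where
  pos : ∀ a b, (paley p).Adj a b → 0 < w a b
  symm : ∀ a b, w a b = w b a
  specList_le : ∀ a b : ZMod p, a ≠ b → ∀ Q : (paley p).Walk a b, Q.IsPath →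
    listWeight w (specList p a b) ≤ walkWeight w Q

namespace MetrizesPaleySystem

variable [Fact p.Prime] {w : ZMod p → ZMod p → ℝ}

lemma diffWeight_pos (hw : MetrizesPaleySystem p w) (h1 : IsSquare (-1 : ZMod p)) {d : ZMod p}
    (hd : IsQR p d) : 0 < diffWeight w d :=
  sum_pos (fun t _ => hw.pos _ _ ((paley_adj_iff h1).mpr (by rwa [add_sub_cancel_left])))
    univ_nonempty

lemma diffWeight_specList_le (hw : MetrizesPaleySystem p w) (h20 : (2 : ZMod p) ≠ 0)
    (l : List (ZMod p)) (hl : l ≠ []) (hchain : l.IsChain (paley p).Adj) (hnodup : l.Nodup)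
    (hends : l.head hl ≠ l.getLast hl) :
    listWeight (fun x y => diffWeight w (y - x)) (specList p (l.head hl) (l.getLast hl)) ≤
      listWeight (fun x y => diffWeight w (y - x)) l := by
  rw [← sum_listWeight_map_add, ← sum_listWeight_map_add]
  refine sum_le_sum fun t _ => ?_
  have hlt : l.map (t + ·) ≠ [] := by simpa using hl
  have hchaint : (l.map (t + ·)).IsChain (paley p).Adj :=
    (List.isChain_map _).mpr (hchain.imp fun a b h => (paley_adj_add t a b).mpr h)
  have hpath : (SimpleGraph.Walk.ofSupport _ hlt hchaint).IsPath := by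
    rw [SimpleGraph.Walk.isPath_def, SimpleGraph.Walk.support_ofSupport]
    exact hnodup.map (add_right_injective t)
  have := hw.specList_le _ _ (by simpa using hends) _ hpath
  rwa [walkWeight_eq_listWeight_support, SimpleGraph.Walk.support_ofSupport, List.head_map,
    List.getLast_map, specList_add h20] at this

lemma two_mul_diffWeight_half_le (hw : MetrizesPaleySystem p w) (h1 : IsQR p (-1))
    (h20 : (2 : ZMod p) ≠ 0) {d a : ZMod p} (hd : ¬IsQR p d) (hd0 : d ≠ 0) (hd3 : d ≠ 3)
    (ha : IsQR p a) (hda : IsQR p (d - a)) :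
    2 * diffWeight w (d * 2⁻¹) ≤ diffWeight w a + diffWeight w (d - a) := by
  have : listWeight (fun x y => diffWeight w (y - x)) (specList p 0 d) ≤
      listWeight (fun x y => diffWeight w (y - x)) [0, a, d] :=
    hw.diffWeight_specList_le h20 [0, a, d] (by simp)
      (by simp [List.isChain_cons_cons, paley_adj_iff h1.2, ha, hda])
      (by simp [ha.1.symm, hd0.symm, (sub_ne_zero.mp hda.1).symm]) hd0.symm
  have hhalf : d - d * 2⁻¹ = d * 2⁻¹ := by field_simp; ring
  rw [specList_of_ne_three (by rwa [sub_zero]) (by rwa [sub_zero])] at this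
  simp only [listWeight_cons_cons, listWeight_singleton, zero_add, sub_zero, hhalf] at this
  linarith

lemma two_mul_diffWeight_one_le (hw : MetrizesPaleySystem p w) (h1 : IsQR p (-1))
    (h20 : (2 : ZMod p) ≠ 0) (h3 : ¬IsQR p 3) (h30 : (3 : ZMod p) ≠ 0) :
    2 * diffWeight w 1 ≤ diffWeight w 4 := by
  have h43 : (4 : ZMod p) ≠ 3 := fun h => one_ne_zero (by linear_combination h)
  have : listWeight (fun x y => diffWeight w (y - x)) (specList p 0 3) ≤
      listWeight (fun x y => diffWeight w (y - x)) [0, 4, 3] :=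
    hw.diffWeight_specList_le h20 [0, 4, 3] (by simp)
      (by norm_num [List.isChain_cons_cons, paley_adj_iff h1.2, isQR_four h20, h1])
      (by simp [(isQR_four h20).1.symm, h30.symm, h43]) h30.symm
  rw [specList_of_eq_three (by rwa [sub_zero]) (sub_zero 3)] at this
  norm_num [listWeight_cons_cons, listWeight_singleton, diffWeight_neg hw.symm] at this
  linarith

lemma two_mul_diffWeight_three_halves_le (hw : MetrizesPaleySystem p w) (h1 : IsQR p (-1))
    (h20 : (2 : ZMod p) ≠ 0) (h3 : ¬IsQR p 3) (h30 : (3 : ZMod p) ≠ 0) :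
    2 * diffWeight w (3 * 2⁻¹) ≤ 3 * diffWeight w 1 := by
  have hm3 : ¬IsQR p (-3) := fun h => h3 ⟨h30, by simpa using h1.2.mul h.2⟩
  have hm33 : (-3 : ZMod p) ≠ 3 := fun h => mul_ne_zero h20 h30 (by linear_combination -h)
  have h12 : (1 : ZMod p) ≠ 2 := fun h => one_ne_zero (by linear_combination -h)
  have h13 : (1 : ZMod p) ≠ 3 := fun h => h20 (by linear_combination -h)
  have h23 : (2 : ZMod p) ≠ 3 := fun h => one_ne_zero (by linear_combination -h)
  have : listWeight (fun x y => diffWeight w (y - x)) (specList p 0 (-3)) ≤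
      listWeight (fun x y => diffWeight w (y - x)) [0, -1, -2, -3] :=
    hw.diffWeight_specList_le h20 [0, -1, -2, -3] (by simp)
      (by norm_num [List.isChain_cons_cons, paley_adj_iff h1.2, h1])
      (by simp [h20, h30, h12, h13, h23]) (by simpa using h30)
  have hhalf : -3 + 3 * 2⁻¹ = -(3 * 2⁻¹ : ZMod p) := by field_simp; ring
  rw [specList_of_ne_three (by rwa [sub_zero]) (by rwa [sub_zero])] at this
  norm_num [listWeight_cons_cons, listWeight_singleton, hhalf, diffWeight_neg hw.symm] at this
  linarith

lemma two_mul_diffWeight_one_le_of_isMax (hw : MetrizesPaleySystem p w) (h1 : IsQR p (-1))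
    (h2 : ¬IsQR p 2) (h3 : ¬IsQR p 3) {x : ZMod p}
    (hmax : ∀ a, IsQR p a → diffWeight w a ≤ diffWeight w x) :
    2 * diffWeight w 1 ≤ diffWeight w x :=
  have h20 := two_ne_zero_of_not_isQR_three h3
  (hw.two_mul_diffWeight_one_le h1 h20 h3 (three_ne_zero_of_not_isQR_two h1 h2)).trans
    (hmax 4 (isQR_four h20))

lemma two_mul_diffWeight_le_of_isMax (hw : MetrizesPaleySystem p w) (h1 : IsQR p (-1))
    (h2 : ¬IsQR p 2) (h3 : ¬IsQR p 3) {x : ZMod p} (hx : IsQR p x)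
    (hmax : ∀ a, IsQR p a → diffWeight w a ≤ diffWeight w x) {a : ZMod p} (ha : IsQR p a)
    (hxa : IsQR p (2 * x - a)) :
    2 * diffWeight w x ≤ diffWeight w a + diffWeight w (2 * x - a) := by
  have h20 := two_ne_zero_of_not_isQR_three h3
  have hhalf : 2 * x * 2⁻¹ = x := by field_simp
  have hx3 : 2 * x ≠ 3 := by
    intro h
    have h32 := hw.two_mul_diffWeight_three_halves_le h1 h20 h3
      (three_ne_zero_of_not_isQR_two h1 h2)
    rw [← h, hhalf] at h32
    linarith [hw.diffWeight_pos h1.2 isQR_one,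
      hw.two_mul_diffWeight_one_le_of_isMax h1 h2 h3 hmax]
  have := hw.two_mul_diffWeight_half_le h1 h20 (not_isQR_two_mul h2 hx) (mul_ne_zero h20 hx.1)
    hx3 ha hxa
  rwa [hhalf] at this

lemma isMax_of_isQR_two_mul_sub (hw : MetrizesPaleySystem p w) (h1 : IsQR p (-1))
    (h2 : ¬IsQR p 2) (h3 : ¬IsQR p 3) {x : ZMod p} (hx : IsQR p x)
    (hmax : ∀ a, IsQR p a → diffWeight w a ≤ diffWeight w x) {a : ZMod p} (ha : IsQR p a)
    (hxa : IsQR p (2 * x - a)) :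
    ∀ b, IsQR p b → diffWeight w b ≤ diffWeight w a := fun b hb => by
  linarith [hw.two_mul_diffWeight_le_of_isMax h1 h2 h3 hx hmax ha hxa, hmax b hb, hmax _ hxa]

lemma not_isSquare_two_mul_add_one_of_isMax (hw : MetrizesPaleySystem p w) (h1 : IsQR p (-1))
    (h2 : ¬IsQR p 2) (h3 : ¬IsQR p 3) {x : ZMod p} (hx : IsQR p x)
    (hmax : ∀ a, IsQR p a → diffWeight w a ≤ diffWeight w x) :
    ¬IsSquare (2 * x + 1) ∧ ¬IsSquare (1 - 2 * x) := by
  have hnot : ∀ a, IsQR p a → diffWeight w a = diffWeight w 1 → ¬IsQR p (2 * x - a) :=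
    fun a ha ha1 hxa => by
      linarith [hw.two_mul_diffWeight_le_of_isMax h1 h2 h3 hx hmax ha hxa, hmax _ hxa,
        hw.two_mul_diffWeight_one_le_of_isMax h1 h2 h3 hmax, hw.diffWeight_pos h1.2 isQR_one]
  have h2x := not_isQR_two_mul h2 hx
  constructor
  · intro hsq
    refine hnot (-1) h1 (diffWeight_neg hw.symm 1) ⟨fun h0 => h2x ?_, by rwa [sub_neg_eq_add]⟩
    rwa [show 2 * x = -1 by linear_combination h0]
  · intro hsq
    refine hnot 1 isQR_one rfl ⟨fun h0 => h2x ?_, by simpa [neg_sub] using h1.2.mul hsq⟩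
    rw [show 2 * x = 1 by linear_combination h0]
    exact isQR_one

end MetrizesPaleySystem

end Paley

theorem stmt_17_general (p : ℕ) [Fact p.Prime]
    (h1 : IsQR p (-1)) (h2 : ¬ IsQR p 2) (h3 : ¬ IsQR p 3) :
    ¬ ∃ w : ZMod p → ZMod p → ℝ,
      (∀ a b, (paley p).Adj a b → 0 < w a b) ∧
      (∀ a b, w a b = w b a) ∧
      (∀ a b : ZMod p, a ≠ b → ∀ Q : (paley p).Walk a b, Q.IsPath →
        listWeight w (specList p a b) ≤ walkWeight w Q) := by
  rintro ⟨w, hpos, hsymm, hmin⟩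
  have hw : MetrizesPaleySystem p w := ⟨hpos, hsymm, hmin⟩
  have h20 := two_ne_zero_of_not_isQR_three h3
  obtain ⟨x, hx, hmax⟩ := Set.exists_max_image {a | IsQR p a} (diffWeight w) (Set.toFinite _)
    ⟨1, isQR_one⟩
  have hχ2 : quadraticChar (ZMod p) 2 = -1 :=
    quadraticChar_neg_one_iff_not_isSquare.mpr fun h => h2 ⟨h20, h⟩
  have hχ2x : quadraticChar (ZMod p) (2 * x) = -1 := by
    rw [map_mul, hχ2, isQR_iff_quadraticChar_eq_one.mp hx, neg_one_mul]
  refine (card_quadraticChar_neg_one_lt (isQR_iff_quadraticChar_eq_one.mp h1) hχ2 hχ2x).not_ge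
    (card_le_card_of_injOn (fun a => 2 * a + 1) (fun a ha => ?_) fun a _ b _ h => ?_)
  · simp only [mem_coe, mem_filter, mem_univ, true_and, ← isQR_iff_quadraticChar_eq_one]
      at ha ⊢
    have hamax := hw.isMax_of_isQR_two_mul_sub h1 h2 h3 hx hmax ha.1 ha.2
    obtain ⟨hb, hb'⟩ := hw.not_isSquare_two_mul_add_one_of_isMax h1 h2 h3 ha.1 hamax
    rw [quadraticChar_neg_one_iff_not_isSquare, quadraticChar_neg_one_iff_not_isSquare,
      show (2 : ZMod p) - (2 * a + 1) = 1 - 2 * a by ring]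
    exact ⟨hb, hb'⟩
  · simpa [h20] using h

theorem stmt_17 (p : ℕ) [Fact p.Prime] (hp5 : 5 < p) (hp : 1711 ≤ p)
    (h1 : IsQR p (-1)) (h2 : ¬ IsQR p 2) (h3 : ¬ IsQR p 3) :
    ¬ ∃ w : ZMod p → ZMod p → ℝ,
      (∀ a b, (paley p).Adj a b → 0 < w a b) ∧
      (∀ a b, w a b = w b a) ∧
      (∀ a b : ZMod p, a ≠ b → ∀ Q : (paley p).Walk a b, Q.IsPath →
        listWeight w (specList p a b) ≤ walkWeight w Q) :=
  stmt_17_general p h1 h2 h3
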